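/- arXiv:0711.4457 — 5 statements merged into one kernel-verified Lean document; each statement's English description precedes it below -/
import Mathlib

section
/- Let α ∈ (0,2) and let a ∈ L^α(ℝ, dx) with ‖a‖_α > 0. Then there exist constants ε₁ > 0 and ε₂ > 0 and an integer N such that for every n ≥ N, the pair f := a(-·), g := a(n-·) ∈ L^α(ℝ, dx) satisfies Assumption (A1) with constant ε₁ and Assumption (A2) with constant ε₂ (with constants not depending on n). (Paper's Proposition 2.2.) -/
open MeasureTheory Real Set Filter
open scoped ENNReal Topology

noncomputable def nrm (α : ℝ) {S : Type*} [MeasurableSpace S] (μ : Measure S) (f : S → ℝ) : ℝ :=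
  (∫ s, |f s| ^ α ∂μ) ^ (1 / α)

noncomputable def dep2 (α : ℝ) {S : Type*} [MeasurableSpace S] (μ : Measure S) (f g : S → ℝ) : ℝ :=
  ∫ s, |f s * g s| ^ (α / 2) ∂μ

noncomputable def dep1s (α : ℝ) {S : Type*} [MeasurableSpace S] (μ : Measure S) (f g : S → ℝ) : ℝ :=
  ∫ s, |f s| ^ (α - 1) * |g s| ∂μ

noncomputable def dep1 (α : ℝ) {S : Type*} [MeasurableSpace S] (μ : Measure S) (f g : S → ℝ) : ℝ :=
  dep1s α μ f g + dep1s α μ g f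

/-- `f ∈ L^α(S, μ)`. -/
def MemLalpha (α : ℝ) {S : Type*} [MeasurableSpace S] (μ : Measure S) (f : S → ℝ) : Prop :=
  AEStronglyMeasurable f μ ∧ Integrable (fun s => |f s| ^ α) μ

/-- Assumption (A1) with constant ε₁. -/
def A1 (α ε₁ : ℝ) {S : Type*} [MeasurableSpace S] (μ : Measure S) (f g : S → ℝ) : Prop :=
  nrm α μ f ^ (α / 2) * nrm α μ g ^ (α / 2) - dep2 α μ f g
    ≥ ε₁ * (nrm α μ f ^ (α / 2) * nrm α μ g ^ (α / 2))

/-- Assumption (A2) with constant ε₂. -/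
def A2 (α ε₂ : ℝ) {S : Type*} [MeasurableSpace S] (μ : Measure S) (f g : S → ℝ) : Prop :=
  ∀ u v : ℝ, nrm α μ (fun s => u * f s + v * g s) ^ α
    ≥ ε₂ * (|u| ^ α * nrm α μ f ^ α + |v| ^ α * nrm α μ g ^ α)

noncomputable def Ufun (α : ℝ) {S : Type*} [MeasurableSpace S] (μ : Measure S)
    (f g : S → ℝ) (u v : ℝ) : ℝ :=
  Real.exp (-(nrm α μ (fun s => u * f s + v * g s) ^ α)) -
    Real.exp (-(nrm α μ (fun s => u * f s) ^ α) - nrm α μ (fun s => v * g s) ^ α)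

/-- signed power `a^⟨p⟩ = sign(a)|a|^p`. -/
noncomputable def spow (a p : ℝ) : ℝ := Real.sign a * |a| ^ p

noncomputable def D1 (α : ℝ) {S : Type*} [MeasurableSpace S] (μ : Measure S)
    (f g : S → ℝ) (u v : ℝ) : ℝ :=
  -α * (∫ s, spow (u * f s + v * g s) (α - 1) * f s ∂μ) *
      Real.exp (-(nrm α μ (fun s => u * f s + v * g s) ^ α)) +
    α * (∫ s, spow (u * f s) (α - 1) * f s ∂μ) *
      Real.exp (-(nrm α μ (fun s => u * f s) ^ α) - nrm α μ (fun s => v * g s) ^ α)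

noncomputable def D2 (α : ℝ) {S : Type*} [MeasurableSpace S] (μ : Measure S)
    (f g : S → ℝ) (u v : ℝ) : ℝ :=
  -(α * (α - 1)) * (∫ s, (if f s = 0 ∨ g s = 0 then (0:ℝ) else
        |u * f s + v * g s| ^ (α - 2) * (f s * g s)) ∂μ) *
      Real.exp (-(nrm α μ (fun s => u * f s + v * g s) ^ α)) +
    α ^ 2 * (∫ s, spow (u * f s + v * g s) (α - 1) * f s ∂μ) *
      (∫ s, spow (u * f s + v * g s) (α - 1) * g s ∂μ) *
      Real.exp (-(nrm α μ (fun s => u * f s + v * g s) ^ α)) -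
    α ^ 2 * (∫ s, spow (u * f s) (α - 1) * f s ∂μ) *
      (∫ s, spow (v * g s) (α - 1) * g s ∂μ) *
      Real.exp (-(nrm α μ (fun s => u * f s) ^ α) - nrm α μ (fun s => v * g s) ^ α)

/-- `(ξ, η)` is jointly SαS with spectral pair `(f, g)`. -/
def JointSAS (α : ℝ) {S : Type*} [MeasurableSpace S] (μ : Measure S) (f g : S → ℝ)
    {Ω : Type*} [MeasurableSpace Ω] (P : Measure Ω) (ξ η : Ω → ℝ) : Prop :=
  ∀ u v : ℝ, (∫ ω, Complex.exp (Complex.I * ((u * ξ ω + v * η ω : ℝ) : ℂ)) ∂P)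
    = Complex.exp (-((nrm α μ (fun s => u * f s + v * g s) ^ α : ℝ) : ℂ))

/-! The `α`-mass `I` of `a` lies, up to `I / 16`, in some bounded interval, so for large `n`
the reflection `f = a(-·)` and the translate `g = a(n - ·)` have all but `I / 16` of their mass
on opposite sides of `n / 2`. On each side, AM-GM in the form
`|xy|^(α/2) ≤ |x|^α / 8 + 2 |y|^α` (with `x` the function dominating on that side) gives
`[f, g]₂ ≤ I / 2`, while the quasi-triangle inequality `|s|^α ≤ 4 (|s + t|^α + |t|^α)`
bounds `‖uf + vg‖_α^α` from below by `(11/64) (|u|^α + |v|^α) I`. -/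

lemma abs_add_rpow_le_two_rpow_mul {p : ℝ} (hp : 0 ≤ p) (s t : ℝ) :
    |s + t| ^ p ≤ 2 ^ p * (|s| ^ p + |t| ^ p) := by
  wlog hst : |s| ≤ |t| generalizing s t
  · simpa only [add_comm] using this t s (le_of_not_ge hst)
  calc |s + t| ^ p ≤ (2 * |t|) ^ p := by
        gcongr
        linarith [abs_add_le s t]
    _ = 2 ^ p * |t| ^ p := mul_rpow zero_le_two (abs_nonneg t)
    _ ≤ 2 ^ p * (|s| ^ p + |t| ^ p) := by
        gcongr
        exact le_add_of_nonneg_left (rpow_nonneg (abs_nonneg s) p)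

lemma abs_rpow_div_four_sub_le {α : ℝ} (hα0 : 0 ≤ α) (hα2 : α ≤ 2) (s t : ℝ) :
    |s| ^ α / 4 - |t| ^ α ≤ |s + t| ^ α := by
  have h2 : (2 : ℝ) ^ α ≤ 4 :=
    calc (2 : ℝ) ^ α ≤ 2 ^ (2 : ℝ) := rpow_le_rpow_of_exponent_le one_le_two hα2
      _ = 4 := by norm_num
  have h := abs_add_rpow_le_two_rpow_mul hα0 (s + t) (-t)
  rw [add_neg_cancel_right, abs_neg] at h
  have := mul_le_mul_of_nonneg_right h2 (by positivity : 0 ≤ |s + t| ^ α + |t| ^ α)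
  linarith

lemma abs_mul_rpow_half_le (α x y : ℝ) : |x * y| ^ (α / 2) ≤ |x| ^ α / 8 + 2 * |y| ^ α := by
  have hsq : ∀ z : ℝ, |z| ^ α = (|z| ^ (α / 2)) ^ 2 := fun z => by
    rw [← rpow_natCast, ← rpow_mul (abs_nonneg z)]; norm_num
  rw [abs_mul, mul_rpow (abs_nonneg x) (abs_nonneg y), hsq x, hsq y]
  nlinarith [sq_nonneg (|x| ^ (α / 2) - 4 * |y| ^ (α / 2))]

section MemLalpha

variable {S : Type*} [MeasurableSpace S] {μ : Measure S} {α : ℝ} {f g : S → ℝ}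

lemma MeasureTheory.AEStronglyMeasurable.abs_rpow (hf : AEStronglyMeasurable f μ) (p : ℝ) :
    AEStronglyMeasurable (fun s => |f s| ^ p) μ :=
  (continuous_abs.measurable.comp_aemeasurable hf.aemeasurable).pow_const p |>.aestronglyMeasurable

lemma MemLalpha.const_mul (hf : MemLalpha α μ f) (c : ℝ) : MemLalpha α μ (fun s => c * f s) :=
  ⟨hf.1.const_mul c, by
    simpa only [abs_mul, mul_rpow (abs_nonneg _) (abs_nonneg _)] using hf.2.const_mul (|c| ^ α)⟩

lemma MemLalpha.add (hα : 0 ≤ α) (hf : MemLalpha α μ f) (hg : MemLalpha α μ g) :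
    MemLalpha α μ (fun s => f s + g s) :=
  ⟨hf.1.add hg.1, ((hf.2.add hg.2).const_mul (2 ^ α)).mono' ((hf.1.add hg.1).abs_rpow α)
    (.of_forall fun _ => by
      rw [norm_of_nonneg (rpow_nonneg (abs_nonneg _) _)]
      exact abs_add_rpow_le_two_rpow_mul hα _ _)⟩

lemma MemLalpha.integrable_abs_mul_rpow_half (hf : MemLalpha α μ f) (hg : MemLalpha α μ g) :
    Integrable (fun s => |f s * g s| ^ (α / 2)) μ :=
  ((hf.2.div_const 8).add (hg.2.const_mul 2)).mono' ((hf.1.mul hg.1).abs_rpow _)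
    (.of_forall fun _ => by
      rw [norm_of_nonneg (rpow_nonneg (abs_nonneg _) _)]
      exact abs_mul_rpow_half_le α _ _)

lemma MemLalpha.comp_sub_left {a : ℝ → ℝ} (ha : MemLalpha α volume a) (c : ℝ) :
    MemLalpha α volume (fun x => a (c - x)) :=
  ⟨ha.1.comp_quasiMeasurePreserving
    (Measure.measurePreserving_sub_left volume c).quasiMeasurePreserving, ha.2.comp_sub_left c⟩

lemma setIntegral_abs_rpow_nonneg {E : Set S} (hE : MeasurableSet E) (f : S → ℝ) (p : ℝ) :
    0 ≤ ∫ s in E, |f s| ^ p ∂μ :=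
  setIntegral_nonneg hE fun _ _ => rpow_nonneg (abs_nonneg _) p

lemma nrm_rpow_self (hα : α ≠ 0) (μ : Measure S) (f : S → ℝ) :
    nrm α μ f ^ α = ∫ s, |f s| ^ α ∂μ := by
  rw [nrm, ← rpow_mul (integral_nonneg fun _ => rpow_nonneg (abs_nonneg _) _),
    one_div_mul_cancel hα, rpow_one]

lemma nrm_rpow_half (hα : α ≠ 0) (μ : Measure S) (f : S → ℝ) :
    nrm α μ f ^ (α / 2) = √(∫ s, |f s| ^ α ∂μ) := by
  rw [nrm, ← rpow_mul (integral_nonneg fun _ => rpow_nonneg (abs_nonneg _) _), sqrt_eq_rpow]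
  congr 1
  field_simp

end MemLalpha

structure AlmostSeparated {S : Type*} [MeasurableSpace S] (α : ℝ) (μ : Measure S) (E : Set S)
    (f g : S → ℝ) (I : ℝ) : Prop where
  measurableSet : MeasurableSet E
  memLalpha_left : MemLalpha α μ f
  memLalpha_right : MemLalpha α μ g
  integral_left : ∫ s, |f s| ^ α ∂μ = I
  integral_right : ∫ s, |g s| ^ α ∂μ = I
  setIntegral_compl_left_le : ∫ s in Eᶜ, |f s| ^ α ∂μ ≤ I / 16
  setIntegral_right_le : ∫ s in E, |g s| ^ α ∂μ ≤ I / 16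

namespace AlmostSeparated

variable {S : Type*} [MeasurableSpace S] {μ : Measure S} {α I : ℝ} {E : Set S} {f g : S → ℝ}

lemma nonneg (h : AlmostSeparated α μ E f g I) : 0 ≤ I :=
  h.integral_left ▸ integral_nonneg fun _ => rpow_nonneg (abs_nonneg _) α

lemma dep2_le_half (h : AlmostSeparated α μ E f g I) : dep2 α μ f g ≤ I / 2 := by
  have hE := h.measurableSet
  have hf := h.memLalpha_left.2
  have hg := h.memLalpha_right.2
  have hφ := h.memLalpha_left.integrable_abs_mul_rpow_half h.memLalpha_right
  have hbdE : ∀ s, |f s * g s| ^ (α / 2) ≤ |f s| ^ α / 8 + 2 * |g s| ^ α := fun s =>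
    abs_mul_rpow_half_le α _ _
  have hbdEc : ∀ s, |f s * g s| ^ (α / 2) ≤ 2 * |f s| ^ α + |g s| ^ α / 8 := fun s => by
    rw [mul_comm]; linarith [abs_mul_rpow_half_le α (g s) (f s)]
  calc dep2 α μ f g
      = ∫ s in E, |f s * g s| ^ (α / 2) ∂μ + ∫ s in Eᶜ, |f s * g s| ^ (α / 2) ∂μ :=
        (integral_add_compl hE hφ).symm
    _ ≤ ∫ s in E, (|f s| ^ α / 8 + 2 * |g s| ^ α) ∂μ
        + ∫ s in Eᶜ, (2 * |f s| ^ α + |g s| ^ α / 8) ∂μ :=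
        add_le_add (setIntegral_mono hφ.integrableOn
            ((hf.div_const 8).add (hg.const_mul 2)).integrableOn hbdE)
          (setIntegral_mono hφ.integrableOn
            ((hf.const_mul 2).add (hg.div_const 8)).integrableOn hbdEc)
    _ = (∫ s in E, |f s| ^ α ∂μ) / 8 + 2 * ∫ s in E, |g s| ^ α ∂μ
        + (2 * ∫ s in Eᶜ, |f s| ^ α ∂μ + (∫ s in Eᶜ, |g s| ^ α ∂μ) / 8) := by
        rw [integral_add (hf.div_const 8).integrableOn (hg.const_mul 2).integrableOn,
          integral_add (hf.const_mul 2).integrableOn (hg.div_const 8).integrableOn,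
          integral_div, integral_div, integral_const_mul, integral_const_mul]
    _ ≤ I / 2 := by
        linarith [integral_add_compl hE hf, integral_add_compl hE hg, h.integral_left,
          h.integral_right, h.setIntegral_compl_left_le, h.setIntegral_right_le,
          setIntegral_abs_rpow_nonneg (μ := μ) hE g α,
          setIntegral_abs_rpow_nonneg (μ := μ) hE.compl f α]

lemma a1 (h : AlmostSeparated α μ E f g I) (hα : α ≠ 0) : A1 α (1 / 2) μ f g := by
  have hprod : nrm α μ f ^ (α / 2) * nrm α μ g ^ (α / 2) = I := by
    rw [nrm_rpow_half hα, nrm_rpow_half hα, h.integral_left, h.integral_right,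
      mul_self_sqrt h.nonneg]
  rw [A1, hprod]
  linarith [h.dep2_le_half]

lemma le_integral_abs_rpow_add (h : AlmostSeparated α μ E f g I) (hα0 : 0 < α) (hα2 : α ≤ 2)
    (u v : ℝ) :
    (|u| ^ α * ∫ s in E, |f s| ^ α ∂μ) / 4 - |v| ^ α * ∫ s in E, |g s| ^ α ∂μ
        + ((|v| ^ α * ∫ s in Eᶜ, |g s| ^ α ∂μ) / 4
          - |u| ^ α * ∫ s in Eᶜ, |f s| ^ α ∂μ)
      ≤ ∫ s, |u * f s + v * g s| ^ α ∂μ := by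
  have hf := h.memLalpha_left.2
  have hg := h.memLalpha_right.2
  have hφ := ((h.memLalpha_left.const_mul u).add hα0.le (h.memLalpha_right.const_mul v)).2
  have habs : ∀ c x : ℝ, |c * x| ^ α = |c| ^ α * |x| ^ α := fun c x => by
    rw [abs_mul, mul_rpow (abs_nonneg _) (abs_nonneg _)]
  have hlowE : ∀ s,
      |u| ^ α * |f s| ^ α / 4 - |v| ^ α * |g s| ^ α ≤ |u * f s + v * g s| ^ α :=
    fun s => by simpa only [habs] using abs_rpow_div_four_sub_le hα0.le hα2 (u * f s) (v * g s)
  have hlowEc : ∀ s,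
      |v| ^ α * |g s| ^ α / 4 - |u| ^ α * |f s| ^ α ≤ |u * f s + v * g s| ^ α :=
    fun s => by
      simpa only [habs, add_comm] using abs_rpow_div_four_sub_le hα0.le hα2 (v * g s) (u * f s)
  calc _ = ∫ s in E, (|u| ^ α * |f s| ^ α / 4 - |v| ^ α * |g s| ^ α) ∂μ
        + ∫ s in Eᶜ, (|v| ^ α * |g s| ^ α / 4 - |u| ^ α * |f s| ^ α) ∂μ := by
        rw [integral_sub ((hf.const_mul _).div_const 4).integrableOn (hg.const_mul _).integrableOn,
          integral_sub ((hg.const_mul _).div_const 4).integrableOn (hf.const_mul _).integrableOn,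
          integral_div, integral_div, integral_const_mul, integral_const_mul, integral_const_mul,
          integral_const_mul]
    _ ≤ ∫ s in E, |u * f s + v * g s| ^ α ∂μ
        + ∫ s in Eᶜ, |u * f s + v * g s| ^ α ∂μ :=
        add_le_add
          (setIntegral_mono (((hf.const_mul _).div_const 4).sub (hg.const_mul _)).integrableOn
            hφ.integrableOn hlowE)
          (setIntegral_mono (((hg.const_mul _).div_const 4).sub (hf.const_mul _)).integrableOn
            hφ.integrableOn hlowEc)
    _ = ∫ s, |u * f s + v * g s| ^ α ∂μ := integral_add_compl h.measurableSet hφ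

lemma a2 (h : AlmostSeparated α μ E f g I) (hα0 : 0 < α) (hα2 : α ≤ 2) :
    A2 α (1 / 8) μ f g := by
  intro u v
  have hfE := integral_add_compl h.measurableSet h.memLalpha_left.2
  have hgE := integral_add_compl h.measurableSet h.memLalpha_right.2
  have hu : |u| ^ α * (I / 8)
      ≤ |u| ^ α * ((∫ s in E, |f s| ^ α ∂μ) / 4 - ∫ s in Eᶜ, |f s| ^ α ∂μ) :=
    mul_le_mul_of_nonneg_left (by linarith [h.integral_left, h.setIntegral_compl_left_le, h.nonneg])
      (rpow_nonneg (abs_nonneg u) α)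
  have hv : |v| ^ α * (I / 8)
      ≤ |v| ^ α * ((∫ s in Eᶜ, |g s| ^ α ∂μ) / 4 - ∫ s in E, |g s| ^ α ∂μ) :=
    mul_le_mul_of_nonneg_left (by linarith [h.integral_right, h.setIntegral_right_le, h.nonneg])
      (rpow_nonneg (abs_nonneg v) α)
  rw [ge_iff_le, nrm_rpow_self hα0.ne', nrm_rpow_self hα0.ne', nrm_rpow_self hα0.ne',
    h.integral_left, h.integral_right]
  linarith [h.le_integral_abs_rpow_add hα0 hα2 u v]

end AlmostSeparated

lemma eventually_almostSeparated_reflect_translate {α : ℝ} {a : ℝ → ℝ}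
    (ha : MemLalpha α volume a) (hI : 0 < ∫ x, |a x| ^ α) :
    ∀ᶠ n : ℕ in atTop, AlmostSeparated α volume (Iic ((n : ℝ) / 2)) (fun x => a (-x))
      (fun x => a (n - x)) (∫ x, |a x| ^ α) := by
  have hhalf : Tendsto (fun n : ℕ => (n : ℝ) / 2) atTop atTop :=
    tendsto_natCast_atTop_atTop.atTop_div_const two_pos
  have hleft := tendsto_integral_Iic_zero (μ := volume) (f := fun x => |a x| ^ α)
    (tendsto_neg_atTop_atBot.comp hhalf)
  have hright := tendsto_integral_Ioi_zero (μ := volume) (f := fun x => |a x| ^ α) hhalf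
  have hI16 : 0 < (∫ x, |a x| ^ α) / 16 := by positivity
  filter_upwards [hleft.eventually (eventually_le_nhds hI16),
    hright.eventually (eventually_le_nhds hI16)] with n hl hr
  have hpre : (fun x => (n : ℝ) - x) ⁻¹' Ici ((n : ℝ) / 2) = Iic ((n : ℝ) / 2) := by
    ext x; simp only [mem_preimage, mem_Ici, mem_Iic]; constructor <;> intro <;> linarith
  refine ⟨measurableSet_Iic, by simpa only [zero_sub] using ha.comp_sub_left 0,
    ha.comp_sub_left n,
    by simpa only [zero_sub] using integral_sub_left_eq_self (fun x => |a x| ^ α) volume (0 : ℝ),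
    integral_sub_left_eq_self (fun x => |a x| ^ α) volume (n : ℝ), ?_, ?_⟩
  · rw [compl_Iic, integral_comp_neg_Ioi _ (fun x => |a x| ^ α)]
    exact hl
  · rw [← hpre, (Measure.measurePreserving_sub_left volume (n : ℝ)).setIntegral_preimage_emb
      (measurableEmbedding_subLeft _) (fun x => |a x| ^ α), integral_Ici_eq_integral_Ioi]
    exact hr

/-- Paper's Proposition 2.2: the pair `(a(-·), a(n-·))` satisfies Assumptions (A1)
and (A2) for all sufficiently large `n`, with constants not depending on `n`. -/
theorem stmt1 (α : ℝ) (hα0 : 0 < α) (hα2 : α < 2) (a : ℝ → ℝ)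
    (ha : MemLalpha α (volume : Measure ℝ) a)
    (hpos : 0 < nrm α (volume : Measure ℝ) a) :
    ∃ ε₁ > (0:ℝ), ∃ ε₂ > (0:ℝ), ∃ N : ℕ, ∀ n : ℕ, N ≤ n →
      A1 α ε₁ (volume : Measure ℝ) (fun x => a (-x)) (fun x => a ((n : ℝ) - x)) ∧
      A2 α ε₂ (volume : Measure ℝ) (fun x => a (-x)) (fun x => a ((n : ℝ) - x)) := by
  have hI : 0 < ∫ x, |a x| ^ α := by
    refine (integral_nonneg fun x => rpow_nonneg (abs_nonneg (a x)) α).lt_of_ne fun h => ?_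
    rw [nrm, ← h, zero_rpow (one_div_ne_zero hα0.ne')] at hpos
    exact hpos.false
  obtain ⟨N, hN⟩ := eventually_atTop.mp (eventually_almostSeparated_reflect_translate ha hI)
  exact ⟨1 / 2, by norm_num, 1 / 8, by norm_num, N, fun n hn =>
    ⟨(hN n hn).a1 hα0.ne', (hN n hn).a2 hα0 hα2.le⟩⟩
end

section
/- Let α ∈ (1,2), let (S, μ) be a σ-finite measure space and f, g ∈ L^α(S, μ), and set F(u,v) := ∫_S |u f(s) + v g(s)|^α μ(ds) for u, v ∈ ℝ. Then for all u, v ∈ ℝ, the partial derivative ∂F/∂u(u,v) exists and equals α ∫_S (uf + vg)^⟨α−1⟩ f dμ. Moreover, at every (u,v) for which ∫_S |uf + vg|^{α−2}|f||g| dμ < ∞ (with the convention that the integrand is 0 at points where f(s) = 0 or g(s) = 0), the mixed partial derivative ∂²F/(∂v∂u)(u,v) exists and equals α(α−1) ∫_S |uf + vg|^{α−2} fg dμ. (Paper's Lemma 5.1.) -/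
/-!
Both derivatives are taken under the integral sign. For `∂/∂u`, the pointwise derivative
`α (uf+vg)^⟨α-1⟩ f` of `|uf+vg|^α` is dominated, for `u'` within distance `1` of `u`, by
`α (|uf+vg| + |f|)^α`, which is integrable because `f, g ∈ L^α`.

For the mixed derivative, the signed power `y ↦ y^⟨p⟩` with `p = α - 1 ∈ (0,1)` satisfies
`|(x+h)^⟨p⟩ - x^⟨p⟩| ≤ 6 |x|^(p-1) |h|` for `x ≠ 0` (mean value theorem when `|h| ≤ |x|/2`,
the bound `|x+h|^p + |x|^p` otherwise). Hence the difference quotients in `v` are dominated by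
`6 |uf+vg|^(α-2) |f| |g|`, whose integral is finite by hypothesis. Finiteness also forces
`uf+vg ≠ 0` almost everywhere on `{fg ≠ 0}`, which is where the integrand is differentiable in `v`;
off that set it does not depend on `v`.
-/

open MeasureTheory Real Set Filter
open scoped ENNReal Topology

lemma spow_eq_abs_rpow_mul (x p : ℝ) : spow x p = |x| ^ (p - 1) * x := by
  rcases eq_or_ne x 0 with rfl | hx
  · simp [spow]
  rw [spow, Real.rpow_sub_one (abs_ne_zero.2 hx)]
  rcases hx.lt_or_gt with h | h
  · rw [Real.sign_of_neg h, abs_of_neg h]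
    field_simp [h.ne]
  · rw [Real.sign_of_pos h, abs_of_pos h]
    field_simp

lemma measurable_spow (p : ℝ) : Measurable fun x => spow x p := by
  simp_rw [spow_eq_abs_rpow_mul]
  fun_prop

lemma abs_spow {p : ℝ} (hp : p ≠ 0) (x : ℝ) : |spow x p| = |x| ^ p := by
  rcases eq_or_ne x 0 with rfl | hx
  · simp [spow, Real.zero_rpow hp]
  · rcases Real.sign_apply_eq_of_ne_zero x hx with h | h <;>
      simp only [spow, h, abs_mul, abs_neg, abs_one, one_mul] <;> exact abs_of_nonneg (by positivity)

lemma hasDerivAt_abs_rpow_eq_spow {p : ℝ} (hp : 1 < p) (x : ℝ) :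
    HasDerivAt (fun y => |y| ^ p) (p * spow x (p - 1)) x := by
  simpa [spow_eq_abs_rpow_mul, sub_sub, mul_assoc, one_add_one_eq_two] using
    hasDerivAt_abs_rpow x hp

lemma hasDerivAt_spow {p x : ℝ} (hx : x ≠ 0) :
    HasDerivAt (fun y => spow y p) (p * |x| ^ (p - 1)) x := by
  simp_rw [spow_eq_abs_rpow_mul]
  refine (((hasDerivAt_abs hx).rpow_const (p := p - 1) (Or.inl (abs_ne_zero.2 hx))).mul
    (hasDerivAt_id' x)).congr_deriv ?_
  have hsign : (SignType.sign x : ℝ) * x = |x| := sign_mul_self x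
  have hpow : |x| ^ (p - 1 - 1) * |x| = |x| ^ (p - 1) := by
    rw [← Real.rpow_add_one (abs_ne_zero.2 hx)]; ring_nf
  linear_combination (p - 1) * |x| ^ (p - 1 - 1) * hsign + (p - 1) * hpow

lemma div_two_rpow_le {a q : ℝ} (ha : 0 ≤ a) (hq : -1 ≤ q) : (a / 2) ^ q ≤ 2 * a ^ q := by
  have h2 : (1 / 2 : ℝ) ≤ 2 ^ q := by
    simpa [Real.rpow_neg_one] using Real.rpow_le_rpow_of_exponent_le one_le_two hq
  rw [Real.div_rpow ha zero_le_two, div_le_iff₀ (by positivity)]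
  nlinarith [Real.rpow_nonneg ha q]

lemma abs_spow_add_sub_spow_le_of_le {p x h : ℝ} (hp0 : 0 < p) (hp1 : p ≤ 1) (hx : x ≠ 0)
    (hh : |h| ≤ |x| / 2) : |spow (x + h) p - spow x p| ≤ 2 * |x| ^ (p - 1) * |h| := by
  have hx0 : 0 < |x| := abs_pos.2 hx
  have hfar : ∀ y ∈ uIcc x (x + h), |x| / 2 ≤ |y| := fun y hy => by
    have := abs_sub_left_of_mem_uIcc hy
    rw [add_sub_cancel_left] at this
    linarith [abs_sub_abs_le_abs_sub x y, abs_sub_comm x y]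
  have hderiv : ∀ y ∈ uIcc x (x + h),
      HasDerivWithinAt (fun z => spow z p) (p * |y| ^ (p - 1)) (uIcc x (x + h)) y :=
    fun y hy => (hasDerivAt_spow (abs_pos.1 (by linarith [hfar y hy]))).hasDerivWithinAt
  have hbound : ∀ y ∈ uIcc x (x + h), ‖p * |y| ^ (p - 1)‖ ≤ 2 * |x| ^ (p - 1) := fun y hy => by
    rw [Real.norm_eq_abs, abs_of_nonneg (by positivity)]
    calc p * |y| ^ (p - 1) ≤ 1 * (|x| / 2) ^ (p - 1) :=
          mul_le_mul hp1 (Real.rpow_le_rpow_of_nonpos (by positivity) (hfar y hy) (by linarith))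
            (by positivity) zero_le_one
      _ ≤ 2 * |x| ^ (p - 1) := by rw [one_mul]; exact div_two_rpow_le hx0.le (by linarith)
  simpa using (convex_uIcc x (x + h)).norm_image_sub_le_of_norm_hasDerivWithin_le hderiv hbound
    left_mem_uIcc right_mem_uIcc

lemma abs_spow_add_sub_spow_le_of_lt {p x h : ℝ} (hp0 : 0 < p) (hp1 : p ≤ 1) (hx : x ≠ 0)
    (hh : |x| / 2 < |h|) : |spow (x + h) p - spow x p| ≤ 6 * |x| ^ (p - 1) * |h| := by
  have hx0 : 0 < |x| := abs_pos.2 hx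
  have h3 : 0 < 3 * |h| := by linarith
  have hle : ∀ y, |y| ≤ 3 * |h| → |y| ^ p ≤ 3 * |x| ^ (p - 1) * |h| := fun y hy =>
    calc |y| ^ p ≤ (3 * |h|) ^ p := Real.rpow_le_rpow (abs_nonneg y) hy hp0.le
      _ = (3 * |h|) ^ (p - 1) * (3 * |h|) := by
          rw [← Real.rpow_add_one h3.ne']; ring_nf
      _ ≤ |x| ^ (p - 1) * (3 * |h|) := mul_le_mul_of_nonneg_right
          (Real.rpow_le_rpow_of_nonpos hx0 (by linarith) (by linarith)) h3.le
      _ = 3 * |x| ^ (p - 1) * |h| := by ring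
  calc |spow (x + h) p - spow x p| ≤ |spow (x + h) p| + |spow x p| := abs_sub _ _
    _ = |x + h| ^ p + |x| ^ p := by rw [abs_spow hp0.ne', abs_spow hp0.ne']
    _ ≤ 3 * |x| ^ (p - 1) * |h| + 3 * |x| ^ (p - 1) * |h| :=
        add_le_add (hle _ (by linarith [abs_add_le x h])) (hle _ (by linarith))
    _ = 6 * |x| ^ (p - 1) * |h| := by ring

lemma abs_spow_add_sub_spow_le {p x : ℝ} (hp0 : 0 < p) (hp1 : p ≤ 1) (hx : x ≠ 0) (h : ℝ) :
    |spow (x + h) p - spow x p| ≤ 6 * |x| ^ (p - 1) * |h| := by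
  rcases le_or_gt |h| (|x| / 2) with hh | hh
  · refine (abs_spow_add_sub_spow_le_of_le hp0 hp1 hx hh).trans ?_
    gcongr
    norm_num
  · exact abs_spow_add_sub_spow_le_of_lt hp0 hp1 hx hh

lemma hasDerivAt_spow_add_mul_mul {p a b x y : ℝ} (h : a * x + b * y = 0 → x * y = 0) :
    HasDerivAt (fun b' => spow (a * x + b' * y) p * x)
      (p * (|a * x + b * y| ^ (p - 1) * (x * y))) b := by
  by_cases hz : a * x + b * y = 0
  · rcases mul_eq_zero.1 (h hz) with hx | hy
    · simpa [hx] using hasDerivAt_const b (0 : ℝ)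
    · simpa [hy] using hasDerivAt_const b (spow (a * x) p * x)
  · have hlin : HasDerivAt (fun b' => a * x + b' * y) y b :=
      (hasDerivAt_mul_const y).const_add (a * x)
    have hd := ((hasDerivAt_spow (p := p) hz).comp b hlin).mul_const x
    exact hd.congr_deriv (by ring)

lemma abs_spow_add_mul_mul_sub_le {p a b x y : ℝ} (hp0 : 0 < p) (hp1 : p ≤ 1)
    (h : a * x + b * y = 0 → x * y = 0) (b' : ℝ) :
    |spow (a * x + b' * y) p * x - spow (a * x + b * y) p * x|
      ≤ 6 * (|a * x + b * y| ^ (p - 1) * (|x| * |y|)) * |b' - b| := by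
  by_cases hz : a * x + b * y = 0
  · rcases mul_eq_zero.1 (h hz) with hx | hy
    · simp [hx]
    · simp [hy]
  · have key := abs_spow_add_sub_spow_le hp0 hp1 hz ((b' - b) * y)
    rw [show a * x + b * y + (b' - b) * y = a * x + b' * y by ring, abs_mul] at key
    rw [← sub_mul, abs_mul]
    calc |spow (a * x + b' * y) p - spow (a * x + b * y) p| * |x|
        ≤ 6 * |a * x + b * y| ^ (p - 1) * (|b' - b| * |y|) * |x| := by gcongr
      _ = 6 * (|a * x + b * y| ^ (p - 1) * (|x| * |y|)) * |b' - b| := by ring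

theorem hasDerivAt_integral_of_dominated_loc_of_lip' {S 𝕜 E : Type*} [MeasurableSpace S]
    {μ : Measure S} [RCLike 𝕜] [NormedAddCommGroup E] [NormedSpace ℝ E] [NormedSpace 𝕜 E]
    [CompleteSpace E] {F : 𝕜 → S → E} {F' : S → E} {x₀ : 𝕜} {bound : S → ℝ} {s : Set 𝕜}
    (hs : s ∈ 𝓝 x₀) (hF_meas : ∀ x ∈ s, AEStronglyMeasurable (F x) μ)
    (hF_int : Integrable (F x₀) μ) (hF'_meas : AEStronglyMeasurable F' μ)
    (h_lipsch : ∀ᵐ a ∂μ, ∀ x ∈ s, ‖F x a - F x₀ a‖ ≤ bound a * ‖x - x₀‖)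
    (bound_integrable : Integrable bound μ) (h_diff : ∀ᵐ a ∂μ, HasDerivAt (F · a) (F' a) x₀) :
    HasDerivAt (fun x => ∫ a, F x a ∂μ) (∫ a, F' a ∂μ) x₀ := by
  set L : E →L[𝕜] 𝕜 →L[𝕜] E := ContinuousLinearMap.smulRightL 𝕜 𝕜 E 1
  have hm : AEStronglyMeasurable (L ∘ F') μ := L.continuous.comp_aestronglyMeasurable hF'_meas
  obtain ⟨hF'_int, key⟩ := hasFDerivAt_integral_of_dominated_loc_of_lip' hs hF_meas hF_int hm
    h_lipsch bound_integrable (h_diff.mono fun a ha => ha.hasFDerivAt)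
  replace hF'_int : Integrable F' μ := by
    rw [← integrable_norm_iff hm] at hF'_int
    simpa [L, Function.comp_def, integrable_norm_iff hF'_meas] using hF'_int
  rw [hasDerivAt_iff_hasFDerivAt]
  simpa only [Function.comp_def, ContinuousLinearMap.integral_comp_comm _ hF'_int] using! key

section LalphaIntegrals

variable {S : Type*} [MeasurableSpace S] {μ : Measure S} {α : ℝ} {f g : S → ℝ}

lemma MemLalpha.memLp (hα : 0 < α) (hf : MemLalpha α μ f) : MemLp f (ENNReal.ofReal α) μ :=
  (integrable_norm_rpow_iff hf.1 (by simpa using hα) ENNReal.ofReal_ne_top).1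
    (by simpa [ENNReal.toReal_ofReal hα.le] using hf.2)

lemma MeasureTheory.MemLp.integrable_abs_rpow (hα : 0 < α) (hf : MemLp f (ENNReal.ofReal α) μ) :
    Integrable (fun s => |f s| ^ α) μ := by
  simpa [ENNReal.toReal_ofReal hα.le] using
    hf.integrable_norm_rpow (by simpa using hα) ENNReal.ofReal_ne_top

lemma abs_spow_mul_le (hα : 1 < α) {x y A : ℝ} (hx : |x| ≤ A) (hy : |y| ≤ A) :
    |spow x (α - 1) * y| ≤ A ^ α := by
  have hA : 0 ≤ A := (abs_nonneg y).trans hy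
  calc |spow x (α - 1) * y| = |x| ^ (α - 1) * |y| := by
        rw [abs_mul, abs_spow (by linarith)]
    _ ≤ A ^ (α - 1) * A ^ (1 : ℝ) := by
        rw [Real.rpow_one]; gcongr
    _ = A ^ α := by rw [← Real.rpow_add' hA (by linarith)]; ring_nf

variable (hα : 1 < α) (hf : MemLp f (ENNReal.ofReal α) μ) (hg : MemLp g (ENNReal.ofReal α) μ)
include hα hf hg

lemma integrable_abs_add_abs_rpow (a b : ℝ) :
    Integrable (fun s => (|a * f s + b * g s| + |f s|) ^ α) μ := by
  have hA : MemLp (fun s => |a * f s + b * g s| + |f s|) (ENNReal.ofReal α) μ :=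
    ((hf.const_mul a).add (hg.const_mul b)).abs.add hf.abs
  refine (hA.integrable_abs_rpow (by linarith)).congr (Eventually.of_forall fun s => ?_)
  simp only [abs_of_nonneg (by positivity : 0 ≤ |a * f s + b * g s| + |f s|)]

lemma integrable_spow_mul (a b : ℝ) :
    Integrable (fun s => spow (a * f s + b * g s) (α - 1) * f s) μ := by
  have hmeas : AEStronglyMeasurable (fun s => spow (a * f s + b * g s) (α - 1) * f s) μ :=
    (((measurable_spow _).comp_aemeasurable ((hf.1.aemeasurable.const_mul a).add
      (hg.1.aemeasurable.const_mul b))).mul hf.1.aemeasurable).aestronglyMeasurable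
  refine (integrable_abs_add_abs_rpow hα hf hg a b).mono hmeas (Eventually.of_forall fun s => ?_)
  rw [Real.norm_eq_abs, Real.norm_eq_abs, abs_of_nonneg (Real.rpow_nonneg (by positivity) α)]
  exact abs_spow_mul_le hα (le_add_of_nonneg_right (abs_nonneg _))
    (le_add_of_nonneg_left (abs_nonneg _))

theorem hasDerivAt_integral_abs_add_rpow (u v : ℝ) :
    HasDerivAt (fun u' => ∫ s, |u' * f s + v * g s| ^ α ∂μ)
      (α * ∫ s, spow (u * f s + v * g s) (α - 1) * f s ∂μ) u := by
  have hα0 : 0 < α := by linarith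
  have hF_int : ∀ u', Integrable (fun s => |u' * f s + v * g s| ^ α) μ := fun u' =>
    ((hf.const_mul u').add (hg.const_mul v)).integrable_abs_rpow hα0
  rw [← integral_const_mul]
  refine (hasDerivAt_integral_of_dominated_loc_of_deriv_le (Metric.ball_mem_nhds u one_pos)
    (F' := fun u' s => α * (spow (u' * f s + v * g s) (α - 1) * f s))
    (Eventually.of_forall fun u' => (hF_int u').aestronglyMeasurable) (hF_int u)
    ((integrable_spow_mul hα hf hg u v).const_mul α).aestronglyMeasurable ?_
    ((integrable_abs_add_abs_rpow hα hf hg u v).const_mul α) ?_).2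
  · refine Eventually.of_forall fun s u' hu' => ?_
    have hdist : |u' - u| < 1 := by simpa [Real.dist_eq] using hu'
    have hx : |u' * f s + v * g s| ≤ |u * f s + v * g s| + |f s| := by
      calc |u' * f s + v * g s| = |(u * f s + v * g s) + (u' - u) * f s| := by ring_nf
        _ ≤ |u * f s + v * g s| + |u' - u| * |f s| := by
            rw [← abs_mul]; exact abs_add_le _ _
        _ ≤ |u * f s + v * g s| + |f s| := by
            gcongr; exact mul_le_of_le_one_left (abs_nonneg _) hdist.le
    rw [Real.norm_eq_abs, abs_mul, abs_of_pos hα0]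
    exact mul_le_mul_of_nonneg_left
      (abs_spow_mul_le hα hx (le_add_of_nonneg_left (abs_nonneg _))) hα0.le
  · refine Eventually.of_forall fun s u' _ => ?_
    have hlin : HasDerivAt (fun u' => u' * f s + v * g s) (f s) u' :=
      (hasDerivAt_mul_const (f s)).add_const (v * g s)
    exact ((hasDerivAt_abs_rpow_eq_spow hα _).comp u' hlin).congr_deriv (by ring)

theorem hasDerivAt_integral_spow_mul (hα2 : α < 2) (u v : ℝ)
    (hfin : ∫⁻ s, ENNReal.ofReal |u * f s + v * g s| ^ (α - 2) *
      ENNReal.ofReal (|f s| * |g s|) ∂μ ≠ ∞) :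
    HasDerivAt (fun v' => ∫ s, spow (u * f s + v' * g s) (α - 1) * f s ∂μ)
      ((α - 1) * ∫ s, |u * f s + v * g s| ^ (α - 2) * (f s * g s) ∂μ) v := by
  have hexp : α - 1 - 1 = α - 2 := by ring
  have hfm := hf.1.aemeasurable
  have hgm := hg.1.aemeasurable
  have hK : AEMeasurable (fun s => ENNReal.ofReal |u * f s + v * g s| ^ (α - 2) *
      ENNReal.ofReal (|f s| * |g s|)) μ := by fun_prop
  have hnull : ∀ᵐ s ∂μ, u * f s + v * g s = 0 → f s * g s = 0 := by
    filter_upwards [ae_lt_top' hK hfin] with s hs hz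
    by_contra hfg
    have hpos : ENNReal.ofReal (|f s| * |g s|) ≠ 0 := by
      rw [← abs_mul, ne_eq, ENNReal.ofReal_eq_zero, abs_nonpos_iff]
      exact hfg
    rw [hz, abs_zero, ENNReal.ofReal_zero, ENNReal.zero_rpow_of_neg (by linarith),
      ENNReal.top_mul hpos] at hs
    exact lt_irrefl _ hs
  have hB : Integrable (fun s => |u * f s + v * g s| ^ (α - 2) * (|f s| * |g s|)) μ := by
    refine (integrable_toReal_of_lintegral_ne_top hK hfin).congr (Eventually.of_forall fun s => ?_)
    -- at `u f s + v g s = 0` the `ℝ≥0∞` power is `∞`, whose `toReal` is the real `0 ^ (α - 2) = 0`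
    simp [ENNReal.toReal_mul, ← ENNReal.toReal_rpow]
  rw [← integral_const_mul]
  refine hasDerivAt_integral_of_dominated_loc_of_lip' univ_mem
    (fun v' _ => (integrable_spow_mul hα hf hg u v').aestronglyMeasurable)
    (integrable_spow_mul hα hf hg u v) (by fun_prop : AEMeasurable _ μ).aestronglyMeasurable
    ?_ (hB.const_mul 6) ?_
  · filter_upwards [hnull] with s hs v' _
    simpa [hexp, mul_assoc] using
      abs_spow_add_mul_mul_sub_le (p := α - 1) (by linarith) (by linarith) hs v'
  · filter_upwards [hnull] with s hs
    simpa [hexp] using hasDerivAt_spow_add_mul_mul (p := α - 1) hs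

end LalphaIntegrals

theorem stmt14_general {S : Type*} [MeasurableSpace S] (μ : Measure S)
    (α : ℝ) (hα1 : 1 < α) (hα2 : α < 2) (f g : S → ℝ)
    (hf : MemLalpha α μ f) (hg : MemLalpha α μ g) (u v : ℝ) :
    HasDerivAt (fun u' => ∫ s, |u' * f s + v * g s| ^ α ∂μ)
      (α * ∫ s, spow (u * f s + v * g s) (α - 1) * f s ∂μ) u ∧
    ((∫⁻ s, (if f s = 0 ∨ g s = 0 then (0:ℝ≥0∞) else
        (ENNReal.ofReal |u * f s + v * g s|) ^ (α - 2) *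
          ENNReal.ofReal (|f s| * |g s|)) ∂μ) < ⊤ →
      HasDerivAt (fun v' => α * ∫ s, spow (u * f s + v' * g s) (α - 1) * f s ∂μ)
        (α * (α - 1) * ∫ s, (if f s = 0 ∨ g s = 0 then (0:ℝ) else
          |u * f s + v * g s| ^ (α - 2) * (f s * g s)) ∂μ) v) := by
  have hf' := hf.memLp (by linarith)
  have hg' := hg.memLp (by linarith)
  refine ⟨hasDerivAt_integral_abs_add_rpow hα1 hf' hg' u v, fun hfin => ?_⟩
  -- both integrands already vanish where `f s = 0` or `g s = 0` (using `0 * ∞ = 0` in `ℝ≥0∞`)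
  have hK : ∀ s, (if f s = 0 ∨ g s = 0 then (0:ℝ≥0∞) else
      ENNReal.ofReal |u * f s + v * g s| ^ (α - 2) * ENNReal.ofReal (|f s| * |g s|)) =
      ENNReal.ofReal |u * f s + v * g s| ^ (α - 2) * ENNReal.ofReal (|f s| * |g s|) :=
    fun s => ite_eq_right_iff.2 (by rintro (h | h) <;> simp [h])
  have hB : ∀ s, (if f s = 0 ∨ g s = 0 then (0:ℝ) else
      |u * f s + v * g s| ^ (α - 2) * (f s * g s)) = |u * f s + v * g s| ^ (α - 2) * (f s * g s) :=
    fun s => ite_eq_right_iff.2 (by rintro (h | h) <;> simp [h])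
  simp only [hK] at hfin
  simp only [hB]
  exact ((hasDerivAt_integral_spow_mul hα1 hf' hg' hα2 u v hfin.ne).const_mul α).congr_deriv
    (by ring)

/-- Paper's Lemma 5.1. -/
theorem stmt14 {S : Type*} [MeasurableSpace S] (μ : Measure S) [SigmaFinite μ]
    (α : ℝ) (hα1 : 1 < α) (hα2 : α < 2) (f g : S → ℝ)
    (hf : MemLalpha α μ f) (hg : MemLalpha α μ g) (u v : ℝ) :
    HasDerivAt (fun u' => ∫ s, |u' * f s + v * g s| ^ α ∂μ)
      (α * ∫ s, spow (u * f s + v * g s) (α - 1) * f s ∂μ) u ∧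
    ((∫⁻ s, (if f s = 0 ∨ g s = 0 then (0:ℝ≥0∞) else
        (ENNReal.ofReal |u * f s + v * g s|) ^ (α - 2) *
          ENNReal.ofReal (|f s| * |g s|)) ∂μ) < ⊤ →
      HasDerivAt (fun v' => α * ∫ s, spow (u * f s + v' * g s) (α - 1) * f s ∂μ)
        (α * (α - 1) * ∫ s, (if f s = 0 ∨ g s = 0 then (0:ℝ) else
          |u * f s + v * g s| ^ (α - 2) * (f s * g s)) ∂μ) v) :=
  stmt14_general μ α hα1 hα2 f g hf hg u v
end

section
/- For a, p ∈ ℝ write a^⟨p⟩ := sign(a)|a|^p. Let x₁, x₂, x, y ∈ ℝ. If α ∈ (1,2), then: (i) |x₁^⟨α−1⟩ − x₂^⟨α−1⟩| ≤ 2|x₂|^{α−2}|x₁ − x₂| whenever x₂ ≠ 0; and (ii) |x₁^⟨α−1⟩ − x₂^⟨α−1⟩| ≤ 2|x₁ − x₂|^{α−1}. If α ∈ (0,2), then (iii) ||x + y|^α − |x|^α − |y|^α| ≤ 2|xy|^{α/2}. (Paper's Lemma 5.3.) -/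
open MeasureTheory Real Set Filter
open scoped ENNReal Topology

private lemma rpow_add_le_add_rpow' {p : ℝ} (hp0 : 0 ≤ p) (hp1 : p ≤ 1) {a b : ℝ}
    (ha : 0 ≤ a) (hb : 0 ≤ b) : (a + b) ^ p ≤ a ^ p + b ^ p := by
  have h := NNReal.rpow_add_le_add_rpow a.toNNReal b.toNNReal hp0 hp1
  have h2 := NNReal.coe_le_coe.2 h
  rwa [NNReal.coe_add, NNReal.coe_rpow, NNReal.coe_rpow, NNReal.coe_rpow, NNReal.coe_add,
    Real.coe_toNNReal a ha, Real.coe_toNNReal b hb] at h2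

private lemma key1 {β : ℝ} (hβ0 : 0 < β) (hβ1 : β ≤ 1) {a b : ℝ} (ha : 0 ≤ a) (hab : a ≤ b) :
    b ^ β - a ^ β ≤ b ^ (β - 1) * (b - a) := by
  rcases eq_or_lt_of_le (ha.trans hab) with h0 | hb
  · have ha0 : a = 0 := le_antisymm (hab.trans h0.symm.le) ha
    simp [← h0, ha0, Real.zero_rpow hβ0.ne']
  · have hbne : b ^ β ≠ 0 := (Real.rpow_pos_of_pos hb β).ne'
    have key : a ^ β = b ^ β * (a / b) ^ β := by
      rw [Real.div_rpow ha hb.le]; field_simp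
    have ht : a / b ≤ (a / b) ^ β := by
      rcases eq_or_lt_of_le ha with h | h
      · simp [← h, Real.zero_rpow hβ0.ne']
      · calc a / b = (a / b) ^ (1 : ℝ) := (Real.rpow_one _).symm
          _ ≤ (a / b) ^ β := Real.rpow_le_rpow_of_exponent_ge (by positivity)
              ((div_le_one hb).2 hab) hβ1
    calc b ^ β - a ^ β = b ^ β * (1 - (a / b) ^ β) := by rw [key]; ring
      _ ≤ b ^ β * (1 - a / b) :=
          mul_le_mul_of_nonneg_left (by linarith) (Real.rpow_pos_of_pos hb β).le
      _ = b ^ (β - 1) * (b - a) := by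
          rw [Real.rpow_sub hb, Real.rpow_one]; field_simp; try ring

private lemma key2 {β : ℝ} (hβ0 : 0 < β) (hβ1 : β ≤ 1) {a b : ℝ} (ha : 0 ≤ a) (hb : 0 < b) :
    |a ^ β - b ^ β| ≤ b ^ (β - 1) * |a - b| := by
  rcases le_total a b with h | h
  · rw [abs_of_nonpos (by have := Real.rpow_le_rpow ha h hβ0.le; linarith),
      abs_of_nonpos (by linarith)]
    have := key1 hβ0 hβ1 ha h
    linarith
  · rw [abs_of_nonneg (by have := Real.rpow_le_rpow hb.le h hβ0.le; linarith),
      abs_of_nonneg (by linarith)]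
    calc a ^ β - b ^ β ≤ a ^ (β - 1) * (a - b) := key1 hβ0 hβ1 hb.le h
      _ ≤ b ^ (β - 1) * (a - b) :=
          mul_le_mul_of_nonneg_right (Real.rpow_le_rpow_of_nonpos hb h (by linarith))
            (by linarith)

private lemma key3 {β : ℝ} (hβ0 : 0 < β) (hβ1 : β ≤ 1) {a b : ℝ} (ha : 0 ≤ a) (hb : 0 ≤ b) :
    |a ^ β - b ^ β| ≤ |a - b| ^ β := by
  rcases le_total a b with h | h
  · have hsub : b ^ β ≤ a ^ β + (b - a) ^ β := by
      have := rpow_add_le_add_rpow' hβ0.le hβ1 ha (by linarith : (0:ℝ) ≤ b - a)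
      simpa using this
    have h2 : |a - b| = b - a := by rw [abs_of_nonpos (by linarith)]; ring
    rw [h2, abs_of_nonpos (by have := Real.rpow_le_rpow ha h hβ0.le; linarith)]
    linarith
  · have hsub : a ^ β ≤ b ^ β + (a - b) ^ β := by
      have := rpow_add_le_add_rpow' hβ0.le hβ1 hb (by linarith : (0:ℝ) ≤ a - b)
      simpa using this
    rw [abs_of_nonneg (by have := Real.rpow_le_rpow hb h hβ0.le; linarith),
      abs_of_nonneg (by linarith)]
    linarith

private lemma abs_spow_s16 (a : ℝ) {β : ℝ} (hβ : 0 < β) : |spow a β| = |a| ^ β := by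
  rcases lt_trichotomy a 0 with h | h | h
  · rw [spow, Real.sign_of_neg h, abs_mul, abs_neg, abs_one, one_mul,
      abs_of_nonneg (Real.rpow_nonneg (abs_nonneg a) β)]
  · simp [spow, h, Real.zero_rpow hβ.ne']
  · rw [spow, Real.sign_of_pos h, one_mul,
      abs_of_nonneg (Real.rpow_nonneg (abs_nonneg a) β)]

private lemma spow_same_sign {a b β : ℝ} (h : 0 < a * b) :
    |spow a β - spow b β| = |(|a| ^ β - |b| ^ β)| := by
  rcases lt_trichotomy a 0 with ha | ha | ha
  · have hb : b < 0 := by nlinarith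
    rw [spow, spow, Real.sign_of_neg ha, Real.sign_of_neg hb,
      show (-1:ℝ) * |a| ^ β - (-1) * |b| ^ β = -(|a| ^ β - |b| ^ β) by ring, abs_neg]
  · simp [ha] at h
  · have hb : 0 < b := by nlinarith
    rw [spow, spow, Real.sign_of_pos ha, Real.sign_of_pos hb, one_mul, one_mul]

private lemma opp_core {β : ℝ} (hβ0 : 0 < β) (hβ1 : β ≤ 1) {A B D : ℝ} (hB : 0 < B)
    (hA : 0 ≤ A) (h1 : A ≤ D) (h2 : B ≤ D) :
    A ^ β + B ^ β ≤ 2 * B ^ (β - 1) * D := by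
  have hD : 0 < D := lt_of_lt_of_le hB h2
  have e1 : A ^ β ≤ B ^ (β - 1) * D := by
    calc A ^ β ≤ D ^ β := Real.rpow_le_rpow hA h1 hβ0.le
      _ = D ^ (β - 1) * D := by rw [← Real.rpow_add_one hD.ne']; norm_num
      _ ≤ B ^ (β - 1) * D :=
          mul_le_mul_of_nonneg_right (Real.rpow_le_rpow_of_nonpos hB h2 (by linarith)) hD.le
  have e2 : B ^ β ≤ B ^ (β - 1) * D := by
    calc B ^ β = B ^ (β - 1) * B := by rw [← Real.rpow_add_one hB.ne']; norm_num
      _ ≤ B ^ (β - 1) * D := mul_le_mul_of_nonneg_left h2 (Real.rpow_pos_of_pos hB _).le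
  linarith

private lemma opp_abs {a b : ℝ} (h : a * b ≤ 0) : |a| ≤ |a - b| ∧ |b| ≤ |a - b| :=
  ⟨sq_le_sq.1 (by nlinarith), sq_le_sq.1 (by nlinarith)⟩

private lemma spow_L1 {β : ℝ} (hβ0 : 0 < β) (hβ1 : β ≤ 1) (a b : ℝ) (hb : b ≠ 0) :
    |spow a β - spow b β| ≤ 2 * |b| ^ (β - 1) * |a - b| := by
  have hBpos : (0:ℝ) < |b| := abs_pos.2 hb
  have hBpow : (0:ℝ) ≤ |b| ^ (β - 1) := (Real.rpow_pos_of_pos hBpos _).le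
  rcases lt_or_ge 0 (a * b) with hab | hab
  · rw [spow_same_sign hab]
    have h := key2 hβ0 hβ1 (abs_nonneg a) hBpos
    have h2 := abs_abs_sub_abs_le_abs_sub a b
    have h3 := mul_le_mul_of_nonneg_left h2 hBpow
    nlinarith [abs_nonneg (|a| ^ β - |b| ^ β)]
  · obtain ⟨h1, h2⟩ := opp_abs hab
    calc |spow a β - spow b β| ≤ |spow a β| + |spow b β| := abs_sub _ _
      _ = |a| ^ β + |b| ^ β := by rw [abs_spow_s16 a hβ0, abs_spow_s16 b hβ0]
      _ ≤ 2 * |b| ^ (β - 1) * |a - b| := opp_core hβ0 hβ1 hBpos (abs_nonneg a) h1 h2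

private lemma spow_L2 {β : ℝ} (hβ0 : 0 < β) (hβ1 : β ≤ 1) (a b : ℝ) :
    |spow a β - spow b β| ≤ 2 * |a - b| ^ β := by
  have hD : (0:ℝ) ≤ |a - b| ^ β := Real.rpow_nonneg (abs_nonneg _) β
  rcases lt_or_ge 0 (a * b) with hab | hab
  · rw [spow_same_sign hab]
    have h := key3 hβ0 hβ1 (abs_nonneg a) (abs_nonneg b)
    have h2 := Real.rpow_le_rpow (abs_nonneg _) (abs_abs_sub_abs_le_abs_sub a b) hβ0.le
    linarith
  · obtain ⟨h1, h2⟩ := opp_abs hab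
    calc |spow a β - spow b β| ≤ |spow a β| + |spow b β| := abs_sub _ _
      _ = |a| ^ β + |b| ^ β := by rw [abs_spow_s16 a hβ0, abs_spow_s16 b hβ0]
      _ ≤ 2 * |a - b| ^ β := by
          have e1 : |a| ^ β ≤ |a - b| ^ β := Real.rpow_le_rpow (abs_nonneg _) h1 hβ0.le
          have e2 : |b| ^ β ≤ |a - b| ^ β := Real.rpow_le_rpow (abs_nonneg _) h2 hβ0.le
          linarith

/-- Paper's Lemma 5.3. -/
theorem stmt16 (α x₁ x₂ x y : ℝ) :
    (1 < α → α < 2 →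
      (x₂ ≠ 0 → |spow x₁ (α - 1) - spow x₂ (α - 1)| ≤ 2 * |x₂| ^ (α - 2) * |x₁ - x₂|) ∧
      |spow x₁ (α - 1) - spow x₂ (α - 1)| ≤ 2 * |x₁ - x₂| ^ (α - 1)) ∧
    (0 < α → α < 2 → |(|x + y| ^ α - |x| ^ α - |y| ^ α)| ≤ 2 * |x * y| ^ (α / 2)) := by
  constructor
  · intro h1 h2
    have hβ0 : 0 < α - 1 := by linarith
    have hβ1 : α - 1 ≤ 1 := by linarith
    refine ⟨fun hx2 => ?_, spow_L2 hβ0 hβ1 x₁ x₂⟩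
    have := spow_L1 hβ0 hβ1 x₁ x₂ hx2
    have e : α - 1 - 1 = α - 2 := by ring
    rwa [e] at this
  · intro h0 h2
    set p := α / 2 with hp
    have hp0 : 0 < p := by positivity
    have hp1 : p ≤ 1 := by rw [hp]; linarith
    set A := |x| with hA
    set B := |y| with hB
    set C := |x + y| with hC
    have hA0 : 0 ≤ A := abs_nonneg _
    have hB0 : 0 ≤ B := abs_nonneg _
    have hC0 : 0 ≤ C := abs_nonneg _
    have sq : ∀ t : ℝ, 0 ≤ t → t ^ p * t ^ p = t ^ α := by
      intro t ht
      rw [← Real.rpow_add' ht (by positivity)]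
      congr 1
      rw [hp]; ring
    have h1 : C ≤ A + B := abs_add_le x y
    have h2' : A ≤ C + B := by
      calc A = |(x + y) + (-y)| := by rw [hA]; ring_nf
        _ ≤ C + B := by rw [hC, hB, ← abs_neg y]; exact abs_add_le _ _
    have h3 : B ≤ C + A := by
      calc B = |(x + y) + (-x)| := by rw [hB]; ring_nf
        _ ≤ C + A := by rw [hC, hA, ← abs_neg x]; exact abs_add_le _ _
    have hCp : C ^ p ≤ A ^ p + B ^ p :=
      (Real.rpow_le_rpow hC0 h1 hp0.le).trans (rpow_add_le_add_rpow' hp0.le hp1 hA0 hB0)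
    have hAp : A ^ p ≤ C ^ p + B ^ p :=
      (Real.rpow_le_rpow hA0 h2' hp0.le).trans (rpow_add_le_add_rpow' hp0.le hp1 hC0 hB0)
    have hBp : B ^ p ≤ C ^ p + A ^ p :=
      (Real.rpow_le_rpow hB0 h3 hp0.le).trans (rpow_add_le_add_rpow' hp0.le hp1 hC0 hA0)
    have hxy : |x * y| ^ p = A ^ p * B ^ p := by
      rw [abs_mul, Real.mul_rpow hA0 hB0]
    have hApos : 0 ≤ A ^ p := Real.rpow_nonneg hA0 p
    have hBpos : 0 ≤ B ^ p := Real.rpow_nonneg hB0 p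
    have hCpos : 0 ≤ C ^ p := Real.rpow_nonneg hC0 p
    rw [hxy, abs_le]
    constructor
    · have := sq A hA0; have := sq B hB0; have := sq C hC0
      nlinarith [hAp, hBp, hCpos, hApos, hBpos]
    · have := sq A hA0; have := sq B hB0; have := sq C hC0
      nlinarith [hCp, hCpos, hApos, hBpos]
end

section
/- Let α > 0, let γ > 0 and δ > 0 with γ + δ = α, and let a ∈ L^α(ℝ, dx). If ∑_{m=−∞}^{∞} (∫_{m−1}^{m} |a(x)|^α dx)^{min(γ,δ)/α} < ∞, then ∑_{n=−∞}^{∞} ∫_ℝ |a(−x)|^γ |a(n−x)|^δ dx < ∞. (Paper's Lemma 6.1.) -/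
open MeasureTheory Real Set Filter
open scoped ENNReal Topology

/-! Cut `ℝ` into the unit intervals `(m - 1, m]` and let `B m` be the mass of `|a|^α` on the
`m`-th one. After `x ↦ -x`, Hölder's inequality with exponents `α/γ`, `α/δ` on the `m`-th interval
bounds the `n`-th integral there by `B m ^ (γ/α) * B (m + n) ^ (δ/α)`. Summing over `m` and `n`
gives `(∑ B ^ (γ/α)) * (∑ B ^ (δ/α))`, and both factors are finite because
`∑ B ^ (min γ δ / α) < ∞` and `ℓ^r ⊆ ℓ^s` for `r ≤ s`. -/

noncomputable def blockLIntegral (F : ℝ → ℝ≥0∞) (m : ℤ) : ℝ≥0∞ :=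
  ∫⁻ x in Ioc ((m : ℝ) - 1) m, F x

theorem lintegral_eq_tsum_blockLIntegral (F : ℝ → ℝ≥0∞) :
    ∫⁻ x, F x = ∑' m : ℤ, blockLIntegral F m := by
  have hIoc : ∀ m : ℤ, Ioc ((-1 : ℝ) + m) (-1 + m + 1) = Ioc ((m : ℝ) - 1) m := fun m => by
    congr 1 <;> ring
  rw [← setLIntegral_univ, ← iUnion_Ioc_add_intCast (-1 : ℝ),
    lintegral_iUnion (fun _ => measurableSet_Ioc) (Set.pairwise_disjoint_Ioc_add_intCast _)]
  simp only [hIoc, blockLIntegral]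

theorem setLIntegral_Ioc_comp_add_intCast (F : ℝ → ℝ≥0∞) (m n : ℤ) :
    ∫⁻ y in Ioc ((m : ℝ) - 1) m, F (y + n) = blockLIntegral F (m + n) := by
  have hIoc : (fun y : ℝ => y + n) ⁻¹' Ioc (((m + n : ℤ) : ℝ) - 1) ((m + n : ℤ) : ℝ)
      = Ioc ((m : ℝ) - 1) m := by
    rw [preimage_add_const_Ioc]
    push_cast
    congr 1 <;> ring
  rw [blockLIntegral, ← hIoc,
    (measurePreserving_add_right volume (n : ℝ)).setLIntegral_comp_preimage_emb
      (measurableEmbedding_addRight _)]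

theorem lintegral_rpow_mul_rpow_comp_sub_le {F : ℝ → ℝ≥0∞} (hF : AEMeasurable F)
    {p q : ℝ} (hp : 0 ≤ p) (hq : 0 ≤ q) (hpq : p + q = 1) (n : ℤ) :
    ∫⁻ x, F (-x) ^ p * F (n - x) ^ q
      ≤ ∑' m : ℤ, blockLIntegral F m ^ p * blockLIntegral F (m + n) ^ q := by
  have hshift : AEMeasurable (fun y : ℝ => F (y + n)) :=
    hF.comp_quasiMeasurePreserving
      (measurePreserving_add_right volume (n : ℝ)).quasiMeasurePreserving
  calc ∫⁻ x, F (-x) ^ p * F (n - x) ^ q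
      = ∫⁻ y, F y ^ p * F (y + n) ^ q := by
        simpa only [sub_eq_neg_add, add_comm] using
          lintegral_neg_eq_self (fun y => F y ^ p * F (y + n) ^ q) (μ := volume)
    _ = ∑' m : ℤ, ∫⁻ y in Ioc ((m : ℝ) - 1) m, F y ^ p * F (y + n) ^ q :=
        lintegral_eq_tsum_blockLIntegral _
    _ ≤ ∑' m : ℤ, blockLIntegral F m ^ p * blockLIntegral F (m + n) ^ q := by
        refine ENNReal.tsum_le_tsum fun m => ?_
        rw [← setLIntegral_Ioc_comp_add_intCast]
        exact ENNReal.lintegral_mul_norm_pow_le hF.restrict hshift.restrict hp hq hpq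

theorem ENNReal.tsum_tsum_mul_comp_add {ι : Type*} [AddGroup ι] (f g : ι → ℝ≥0∞) :
    ∑' n, ∑' m, f m * g (m + n) = (∑' m, f m) * ∑' k, g k := by
  rw [ENNReal.tsum_comm, ← ENNReal.tsum_mul_right]
  refine tsum_congr fun m => ?_
  rw [ENNReal.tsum_mul_left]
  exact congrArg _ ((Equiv.addLeft m).tsum_eq g)

theorem ENNReal.tsum_rpow_ne_top_of_one_le {ι : Type*} {x : ι → ℝ≥0∞} {p : ℝ}
    (hp : 1 ≤ p) (hx : ∑' i, x i ≠ ⊤) : ∑' i, x i ^ p ≠ ⊤ := by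
  have hle : ∀ i, x i ^ p ≤ (∑' j, x j) ^ (p - 1) * x i := fun i => by
    calc x i ^ p = x i ^ (p - 1) * x i := by
          simpa using ENNReal.rpow_add_of_nonneg (x := x i) (p - 1) 1 (by linarith) zero_le_one
      _ ≤ (∑' j, x j) ^ (p - 1) * x i := by
          gcongr
          exact ENNReal.le_tsum i
  refine ne_top_of_le_ne_top ?_ (ENNReal.tsum_le_tsum hle)
  rw [ENNReal.tsum_mul_left]
  exact ENNReal.mul_ne_top (ENNReal.rpow_ne_top_of_nonneg (by linarith) hx) hx

theorem ENNReal.tsum_rpow_ne_top_of_le {ι : Type*} {x : ι → ℝ≥0∞} {r s : ℝ} (hr : 0 < r)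
    (hrs : r ≤ s) (hx : ∑' i, x i ^ r ≠ ⊤) : ∑' i, x i ^ s ≠ ⊤ := by
  have hpow : ∀ i, x i ^ s = (x i ^ r) ^ (s / r) := fun i => by
    rw [← ENNReal.rpow_mul, mul_div_cancel₀ _ hr.ne']
  simp_rw [hpow]
  exact ENNReal.tsum_rpow_ne_top_of_one_le ((one_le_div hr).2 hrs) hx

theorem ENNReal.ofReal_abs_rpow (t : ℝ) {p : ℝ} (hp : 0 ≤ p) :
    ENNReal.ofReal (|t| ^ p) = ‖t‖ₑ ^ p := by
  rw [Real.enorm_eq_ofReal_abs, ENNReal.ofReal_rpow_of_nonneg (abs_nonneg t) hp]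

theorem tsum_blockLIntegral_rpow_ne_top {a : ℝ → ℝ} {α r : ℝ} (hα : 0 ≤ α) (hr : 0 ≤ r)
    (ha : Integrable (fun x => |a x| ^ α))
    (hsum : Summable fun m : ℤ => (∫ x in Ioc ((m : ℝ) - 1) m, |a x| ^ α) ^ r) :
    ∑' m : ℤ, blockLIntegral (fun x => ‖a x‖ₑ ^ α) m ^ r ≠ ⊤ := by
  have hnonneg : ∀ x, 0 ≤ |a x| ^ α := fun x => by positivity
  have hblock : ∀ m : ℤ, ENNReal.ofReal ((∫ x in Ioc ((m : ℝ) - 1) m, |a x| ^ α) ^ r)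
      = blockLIntegral (fun x => ‖a x‖ₑ ^ α) m ^ r := fun m => by
    rw [← ENNReal.ofReal_rpow_of_nonneg
        (setIntegral_nonneg measurableSet_Ioc fun x _ => hnonneg x) hr,
      ofReal_integral_eq_lintegral_ofReal ha.integrableOn (ae_of_all _ hnonneg)]
    simp only [ENNReal.ofReal_abs_rpow _ hα, blockLIntegral]
  rw [← tsum_congr hblock, ← ENNReal.ofReal_tsum_of_nonneg (fun m => by positivity) hsum]
  exact ENNReal.ofReal_ne_top

theorem stmt17_general (α γ δ : ℝ) (hγ : 0 < γ) (hδ : 0 < δ) (hγδ : γ + δ = α)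
    (a : ℝ → ℝ) (ha : MemLalpha α (volume : Measure ℝ) a)
    (hsum : Summable (fun m : ℤ =>
      (∫ x in Set.Ioc ((m : ℝ) - 1) (m : ℝ), |a x| ^ α) ^ (min γ δ / α))) :
    ∑' n : ℤ, ∫⁻ x : ℝ, ENNReal.ofReal (|a (-x)| ^ γ * |a ((n : ℝ) - x)| ^ δ) < ⊤ := by
  have hα : 0 < α := hγδ ▸ add_pos hγ hδ
  set B : ℤ → ℝ≥0∞ := blockLIntegral fun x => ‖a x‖ₑ ^ α
  have hsplit : ∀ p, 0 ≤ p → ∀ t, ENNReal.ofReal (|t| ^ p) = (‖t‖ₑ ^ α) ^ (p / α) :=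
    fun p hp t => by rw [← ENNReal.rpow_mul, mul_div_cancel₀ _ hα.ne', ENNReal.ofReal_abs_rpow t hp]
  have hfinite : ∀ s, min γ δ ≤ s → ∑' m, B m ^ (s / α) ≠ ⊤ := fun s hs =>
    ENNReal.tsum_rpow_ne_top_of_le (by positivity) (by gcongr)
      (tsum_blockLIntegral_rpow_ne_top hα.le (by positivity) ha.2 hsum)
  calc ∑' n : ℤ, ∫⁻ x : ℝ, ENNReal.ofReal (|a (-x)| ^ γ * |a ((n : ℝ) - x)| ^ δ)
      = ∑' n : ℤ, ∫⁻ x, (‖a (-x)‖ₑ ^ α) ^ (γ / α) * (‖a (n - x)‖ₑ ^ α) ^ (δ / α) := by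
        refine tsum_congr fun n => lintegral_congr fun x => ?_
        rw [ENNReal.ofReal_mul (by positivity), hsplit γ hγ.le, hsplit δ hδ.le]
    _ ≤ ∑' n : ℤ, ∑' m : ℤ, B m ^ (γ / α) * B (m + n) ^ (δ / α) :=
        ENNReal.tsum_le_tsum fun n =>
          lintegral_rpow_mul_rpow_comp_sub_le (ha.1.enorm.pow_const α) (by positivity)
            (by positivity) (by rw [← add_div, hγδ, div_self hα.ne']) n
    _ = (∑' m, B m ^ (γ / α)) * ∑' m, B m ^ (δ / α) :=
        ENNReal.tsum_tsum_mul_comp_add (fun m => B m ^ (γ / α)) (fun m => B m ^ (δ / α))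
    _ < ⊤ := ENNReal.mul_lt_top (hfinite γ (min_le_left _ _)).lt_top
        (hfinite δ (min_le_right _ _)).lt_top

/-- Paper's Lemma 6.1. -/
theorem stmt17 (α γ δ : ℝ) (hα : 0 < α) (hγ : 0 < γ) (hδ : 0 < δ) (hγδ : γ + δ = α)
    (a : ℝ → ℝ) (ha : MemLalpha α (volume : Measure ℝ) a)
    (hsum : Summable (fun m : ℤ =>
      (∫ x in Set.Ioc ((m : ℝ) - 1) (m : ℝ), |a x| ^ α) ^ (min γ δ / α))) :
    ∑' n : ℤ, ∫⁻ x : ℝ, ENNReal.ofReal (|a (-x)| ^ γ * |a ((n : ℝ) - x)| ^ δ) < ⊤ :=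
  stmt17_general α γ δ hγ hδ hγδ a ha hsum
end

section
/- Let Q ≥ 1 be an integer, let κ ∈ ℝ, and let ψ: ℝ → ℝ be a bounded, compactly supported measurable function such that ∫_ℝ ψ(t) t^m dt = 0 for all m = 0, 1, …, Q−1. Define h(u) := ∫_ℝ (s + u)₊^κ ψ(s) ds, where x₊^κ := x^κ for x > 0 and x₊^κ := 0 for x ≤ 0. Then there exist constants C > 0 and u₀ > 0 such that |h(u)| ≤ C u^{κ−Q} for all u ≥ u₀. (Paper's Lemma 7.1.) -/
open MeasureTheory Real Set Filter
open scoped ENNReal Topology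

/-!
Once `u` is large, `s + u > 0` on the support of `ψ` and `(s + u) ^ κ = u ^ κ (1 + s / u) ^ κ`.
The binomial series gives `(1 + x) ^ κ = P x + O(|x| ^ Q)` near `0` with `deg P < Q`; the
vanishing moments kill `∫ u ^ κ P (s / u) ψ s ds`, and the remainder contributes at most
`C u ^ (κ - Q) ∫ |s| ^ Q |ψ s| ds`.
-/

open Finset

theorem HasCompactSupport.integrable_mul_continuous {X : Type*} [TopologicalSpace X]
    [MeasurableSpace X] [OpensMeasurableSpace X] [SecondCountableTopology X] {μ : Measure X}
    [IsFiniteMeasureOnCompacts μ] {ψ g : X → ℝ} (hψs : HasCompactSupport ψ)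
    (hψm : Measurable ψ) (hψb : ∃ M, ∀ t, |ψ t| ≤ M) (hg : Continuous g) :
    Integrable (fun t => ψ t * g t) μ := by
  obtain ⟨M, hM⟩ := hψb
  have hψK : IntegrableOn ψ (tsupport ψ) μ :=
    Measure.integrableOn_of_bounded hψs.measure_lt_top.ne hψm.aestronglyMeasurable
      (ae_of_all _ hM)
  refine (integrableOn_iff_integrable_of_support_subset ?_).1
    (hψK.mul_continuousOn_of_subset hg.continuousOn (isClosed_tsupport ψ).measurableSet hψs
      subset_rfl)
  exact (Function.support_mul_subset_left _ _).trans (subset_tsupport ψ)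

section Moments

variable {μ : Measure ℝ} {ψ : ℝ → ℝ} {Q : ℕ}

theorem integrable_mul_sum_pow (hint : ∀ m < Q, Integrable (fun t => ψ t * t ^ m) μ)
    (a : ℕ → ℝ) : Integrable (fun t => ψ t * ∑ m ∈ range Q, a m * t ^ m) μ := by
  simp_rw [mul_sum, mul_left_comm (ψ _)]
  exact integrable_finsetSum _ fun m hm => (hint m (mem_range.1 hm)).const_mul (a m)

theorem integral_mul_sum_pow_eq_zero (hint : ∀ m < Q, Integrable (fun t => ψ t * t ^ m) μ)
    (hmom : ∀ m < Q, ∫ t, ψ t * t ^ m ∂μ = 0) (a : ℕ → ℝ) :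
    ∫ t, ψ t * ∑ m ∈ range Q, a m * t ^ m ∂μ = 0 := by
  simp_rw [mul_sum, mul_left_comm (ψ _)]
  rw [integral_finsetSum _ fun m hm => (hint m (mem_range.1 hm)).const_mul (a m)]
  exact sum_eq_zero fun m hm => by rw [integral_const_mul, hmom m (mem_range.1 hm), mul_zero]

end Moments

theorem exists_abs_one_add_rpow_sub_sum_le (κ : ℝ) (Q : ℕ) :
    ∃ a : ℕ → ℝ, ∃ C > 0, ∃ δ ∈ Ioo (0 : ℝ) 1, ∀ x, |x| ≤ δ →
      |(1 + x) ^ κ - ∑ m ∈ range Q, a m * x ^ m| ≤ C * |x| ^ Q := by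
  obtain ⟨C, hC, hCw⟩ :=
    (one_add_rpow_hasFPowerSeriesAt_zero (a := κ)).isBigO_sub_partialSum_pow Q |>.exists_pos
  obtain ⟨ε, hε, hball⟩ := Metric.eventually_nhds_iff.1 hCw.bound
  refine ⟨(binomialSeries ℝ κ).coeff, C, hC, min (ε / 2) (1 / 2),
    ⟨by positivity, by linarith [min_le_right (ε / 2) (1 / 2)]⟩, fun x hx => ?_⟩
  have hxε : dist x 0 < ε := by
    rw [dist_zero_right, norm_eq_abs]; linarith [min_le_left (ε / 2) (1 / 2)]
  simpa [FormalMultilinearSeries.partialSum, mul_comm] using hball hxε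

section Estimate

variable {κ C δ u : ℝ} {Q : ℕ} {a : ℕ → ℝ}

theorem abs_posPart_rpow_sub_le (hδ : δ < 1)
    (hT : ∀ x, |x| ≤ δ → |(1 + x) ^ κ - ∑ m ∈ range Q, a m * x ^ m| ≤ C * |x| ^ Q)
    (hu : 0 < u) {s : ℝ} (hs : |s| ≤ δ * u) :
    |(if 0 < s + u then (s + u) ^ κ else 0) - u ^ κ * ∑ m ∈ range Q, a m * (s / u) ^ m|
      ≤ C * u ^ (κ - Q) * |s| ^ Q := by
  have hsu : |s / u| ≤ δ := by rw [abs_div, abs_of_pos hu, div_le_iff₀ hu]; exact hs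
  have hpos : 0 < s + u := by nlinarith [neg_abs_le s]
  have hfactor : (s + u) ^ κ = u ^ κ * (1 + s / u) ^ κ := by
    rw [← mul_rpow hu.le (by linarith [neg_abs_le (s / u)]), mul_add, mul_one,
      mul_div_cancel₀ _ hu.ne', add_comm]
  calc |(if 0 < s + u then (s + u) ^ κ else 0) - u ^ κ * ∑ m ∈ range Q, a m * (s / u) ^ m|
      = u ^ κ * |(1 + s / u) ^ κ - ∑ m ∈ range Q, a m * (s / u) ^ m| := by
        rw [if_pos hpos, hfactor, ← mul_sub, abs_mul, abs_of_pos (rpow_pos_of_pos hu κ)]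
    _ ≤ u ^ κ * (C * |s / u| ^ Q) := by gcongr; exact hT _ hsu
    _ = C * u ^ (κ - Q) * |s| ^ Q := by
        rw [abs_div, abs_of_pos hu, div_pow, rpow_sub hu, rpow_natCast]
        field_simp

theorem abs_integral_posPart_rpow_mul_le {A : ℝ} {ψ : ℝ → ℝ} (hδ : δ < 1)
    (hT : ∀ x, |x| ≤ δ → |(1 + x) ^ κ - ∑ m ∈ range Q, a m * x ^ m| ≤ C * |x| ^ Q)
    (hψm : Measurable ψ) (hint : ∀ m, Integrable (fun t => ψ t * t ^ m))
    (hmom : ∀ m < Q, ∫ t, ψ t * t ^ m = 0) (hA : ∀ s, ψ s ≠ 0 → |s| ≤ A)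
    (hu : 0 < u) (hAu : A ≤ δ * u) :
    |∫ s, (if 0 < s + u then (s + u) ^ κ else 0) * ψ s|
      ≤ C * u ^ (κ - Q) * ∫ s, |ψ s * s ^ Q| := by
  set f : ℝ → ℝ := fun s => (if 0 < s + u then (s + u) ^ κ else 0) * ψ s
  set g : ℝ → ℝ := fun s => u ^ κ * (ψ s * ∑ m ∈ range Q, (a m / u ^ m) * s ^ m)
  have hg : Integrable g := (integrable_mul_sum_pow (fun m _ => hint m) _).const_mul _
  have hg0 : ∫ s, g s = 0 := by
    rw [integral_const_mul, integral_mul_sum_pow_eq_zero (fun m _ => hint m) hmom, mul_zero]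
  have hbound : ∀ s, ‖f s - g s‖ ≤ C * u ^ (κ - Q) * |ψ s * s ^ Q| := by
    intro s
    by_cases hψ : ψ s = 0
    · simp [f, g, hψ]
    have hsum : ∑ m ∈ range Q, a m / u ^ m * s ^ m = ∑ m ∈ range Q, a m * (s / u) ^ m := by
      simp only [div_pow, mul_div_assoc', div_mul_eq_mul_div]
    calc ‖f s - g s‖ = |(if 0 < s + u then (s + u) ^ κ else 0)
          - u ^ κ * ∑ m ∈ range Q, a m * (s / u) ^ m| * |ψ s| := by
          rw [norm_eq_abs, ← abs_mul]; congr 1; simp only [f, g, hsum]; ring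
      _ ≤ C * u ^ (κ - Q) * |s| ^ Q * |ψ s| := by
          gcongr; exact abs_posPart_rpow_sub_le hδ hT hu ((hA s hψ).trans hAu)
      _ = C * u ^ (κ - Q) * |ψ s * s ^ Q| := by rw [abs_mul, abs_pow]; ring
  have hfm : Measurable f :=
    (Measurable.ite (measurableSet_lt measurable_const (measurable_id.add_const u))
      (by fun_prop) measurable_const).mul hψm
  have hmajorant : Integrable (fun s => C * u ^ (κ - Q) * |ψ s * s ^ Q|) :=
    (hint Q).abs.const_mul _
  have hfg : Integrable (fun s => f s - g s) :=
    hmajorant.mono' (hfm.aestronglyMeasurable.sub hg.aestronglyMeasurable) (ae_of_all _ hbound)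
  have hf : Integrable f := (hfg.add hg).congr (ae_of_all _ fun s => sub_add_cancel (f s) (g s))
  calc |∫ s, f s| = ‖∫ s, (f s - g s)‖ := by
        rw [norm_eq_abs, integral_sub hf hg, hg0, sub_zero]
    _ ≤ ∫ s, C * u ^ (κ - Q) * |ψ s * s ^ Q| :=
        norm_integral_le_of_norm_le hmajorant (ae_of_all _ hbound)
    _ = C * u ^ (κ - Q) * ∫ s, |ψ s * s ^ Q| := integral_const_mul _ _

end Estimate

theorem stmt19_general (Q : ℕ) (κ : ℝ) (ψ : ℝ → ℝ)
    (hψm : Measurable ψ) (hψb : ∃ M : ℝ, ∀ t, |ψ t| ≤ M) (hψs : HasCompactSupport ψ)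
    (hmom : ∀ m : ℕ, m < Q → ∫ t : ℝ, ψ t * t ^ m = 0) :
    ∃ C > (0:ℝ), ∃ u₀ > (0:ℝ), ∀ u : ℝ, u₀ ≤ u →
      |∫ s : ℝ, (if 0 < s + u then (s + u) ^ κ else 0) * ψ s| ≤ C * u ^ (κ - (Q : ℝ)) := by
  obtain ⟨a, C, hC, δ, ⟨hδ0, hδ1⟩, hT⟩ := exists_abs_one_add_rpow_sub_sum_le κ Q
  have hint : ∀ m : ℕ, Integrable (fun t => ψ t * t ^ m) :=
    fun m => hψs.integrable_mul_continuous hψm hψb (continuous_pow m)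
  obtain ⟨r, hr⟩ := hψs.isBounded.subset_closedBall 0
  have hA : ∀ s, ψ s ≠ 0 → |s| ≤ |r| := fun s hs => by
    simpa using Metric.closedBall_subset_closedBall (le_abs_self r) (hr (subset_tsupport ψ hs))
  set I := ∫ s, |ψ s * s ^ Q|
  have hI : 0 ≤ I := integral_nonneg fun _ => abs_nonneg _
  refine ⟨C * I + 1, by positivity, (|r| + 1) / δ, by positivity, fun u hu => ?_⟩
  have hu0 : 0 < u := lt_of_lt_of_le (by positivity) hu
  have hAu : |r| ≤ δ * u := by rw [div_le_iff₀ hδ0] at hu; linarith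
  calc _ ≤ C * u ^ (κ - Q) * I :=
        abs_integral_posPart_rpow_mul_le hδ1 hT hψm hint hmom hA hu0 hAu
    _ ≤ (C * I + 1) * u ^ (κ - Q) := by nlinarith [rpow_nonneg hu0.le (κ - Q)]

/-- Paper's Lemma 7.1. -/
theorem stmt19 (Q : ℕ) (hQ : 1 ≤ Q) (κ : ℝ) (ψ : ℝ → ℝ)
    (hψm : Measurable ψ) (hψb : ∃ M : ℝ, ∀ t, |ψ t| ≤ M) (hψs : HasCompactSupport ψ)
    (hmom : ∀ m : ℕ, m < Q → ∫ t : ℝ, ψ t * t ^ m = 0) :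
    ∃ C > (0:ℝ), ∃ u₀ > (0:ℝ), ∀ u : ℝ, u₀ ≤ u →
      |∫ s : ℝ, (if 0 < s + u then (s + u) ^ κ else 0) * ψ s| ≤ C * u ^ (κ - (Q : ℝ)) :=
  stmt19_general Q κ ψ hψm hψb hψs hmom
end
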